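/- arXiv:2410.13555 — 3 statements merged into one kernel-verified Lean document; each statement's English description precedes it below -/
import Mathlib

section
/- For each non-negative integer N: if N ≡ 0 (mod 2) then Rt(1,1,4;N) = rT(2,2,2;N); if N ≡ 1 (mod 4) then Rt(1,1,4;N) = 4·rT(4,4,8;N−1); and if N ≡ 3 (mod 4) then Rt(1,1,4;N) = 0. -/
/-- The `n`-th triangular number `n(n+1)/2`. -/
def tri (n : ℕ) : ℕ := n * (n + 1) / 2

/-- The `n`-th generalized pentagonal number `n(3n+1)/2` (`n ∈ ℤ`). -/
def pent (n : ℤ) : ℤ := n * (3 * n + 1) / 2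

/-- The `n`-th generalized octagonal number `n(3n+2)` (`n ∈ ℤ`). -/
def oct (n : ℤ) : ℤ := n * (3 * n + 2)
noncomputable def rCount (a b c : ℕ) (N : ℤ) : ℕ :=
  {x : ℤ × ℤ × ℤ | N = a * x.1 ^ 2 + b * x.2.1 ^ 2 + c * x.2.2 ^ 2}.ncard

noncomputable def TCount (a b c : ℕ) (N : ℤ) : ℕ :=
  {x : ℕ × ℕ × ℕ | N = a * tri x.1 + b * tri x.2.1 + c * tri x.2.2}.ncard

noncomputable def rTCount (a b c : ℕ) (N : ℤ) : ℕ :=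
  {x : ℤ × ℕ × ℕ | N = a * x.1 ^ 2 + b * tri x.2.1 + c * tri x.2.2}.ncard

noncomputable def RtCount (a b c : ℕ) (N : ℤ) : ℕ :=
  {x : ℤ × ℤ × ℕ | N = a * x.1 ^ 2 + b * x.2.1 ^ 2 + c * tri x.2.2}.ncard

noncomputable def GCount (a b c : ℕ) (N : ℤ) : ℕ :=
  {x : ℤ × ℤ × ℤ | N = a * oct x.1 + b * oct x.2.1 + c * oct x.2.2}.ncard

noncomputable def RgCount (a b c : ℕ) (N : ℤ) : ℕ :=
  {x : ℤ × ℤ × ℤ | N = a * x.1 ^ 2 + b * x.2.1 ^ 2 + c * oct x.2.2}.ncard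

noncomputable def RpCount (a b c : ℕ) (N : ℤ) : ℕ :=
  {x : ℤ × ℤ × ℤ | N = a * x.1 ^ 2 + b * x.2.1 ^ 2 + c * pent x.2.2}.ncard

noncomputable def rPCount (a b c : ℕ) (N : ℤ) : ℕ :=
  {x : ℤ × ℤ × ℤ | N = a * x.1 ^ 2 + b * pent x.2.1 + c * pent x.2.2}.ncard

noncomputable def rGCount (a b c : ℕ) (N : ℤ) : ℕ :=
  {x : ℤ × ℤ × ℤ | N = a * x.1 ^ 2 + b * oct x.2.1 + c * oct x.2.2}.ncard

noncomputable def pGCount (a b c : ℕ) (N : ℤ) : ℕ :=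
  {x : ℤ × ℤ × ℤ | N = a * pent x.1 + b * oct x.2.1 + c * oct x.2.2}.ncard

noncomputable def TpCount (a b c : ℕ) (N : ℤ) : ℕ :=
  {x : ℕ × ℕ × ℤ | N = a * tri x.1 + b * tri x.2.1 + c * pent x.2.2}.ncard

noncomputable def TgCount (a b c : ℕ) (N : ℤ) : ℕ :=
  {x : ℕ × ℕ × ℤ | N = a * tri x.1 + b * tri x.2.1 + c * oct x.2.2}.ncard

noncomputable def tGCount (a b c : ℕ) (N : ℤ) : ℕ :=
  {x : ℕ × ℤ × ℤ | N = a * tri x.1 + b * oct x.2.1 + c * oct x.2.2}.ncard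

noncomputable def rtpCount (a b c : ℕ) (N : ℤ) : ℕ :=
  {x : ℤ × ℕ × ℤ | N = a * x.1 ^ 2 + b * tri x.2.1 + c * pent x.2.2}.ncard

noncomputable def rtgCount (a b c : ℕ) (N : ℤ) : ℕ :=
  {x : ℤ × ℕ × ℤ | N = a * x.1 ^ 2 + b * tri x.2.1 + c * oct x.2.2}.ncard

noncomputable def tpgCount (a b c : ℕ) (N : ℤ) : ℕ :=
  {x : ℕ × ℤ × ℤ | N = a * tri x.1 + b * pent x.2.1 + c * oct x.2.2}.ncard

lemma tri_cast (n : ℕ) : (tri n : ℤ) * 2 = n * (n + 1) := by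
  have h : tri n * 2 = n * (n + 1) := Nat.div_mul_cancel (Nat.even_mul_succ_self n).two_dvd
  exact_mod_cast congrArg (Nat.cast : ℕ → ℤ) h

lemma sq_mod_info (x : ℤ) : (x % 2 = 0 ∧ x ^ 2 % 4 = 0) ∨ (x % 2 = 1 ∧ x ^ 2 % 4 = 1) := by
  obtain ⟨a, h | h⟩ := Int.even_or_odd' x
  · left
    have h2 : x ^ 2 = 4 * a ^ 2 := by rw [h]; ring
    omega
  · right
    have h2 : x ^ 2 = 4 * (a ^ 2 + a) + 1 := by rw [h]; ring
    omega

def fEven : ℤ × ℕ × ℕ → ℤ × ℤ × ℕ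
  | (l, m, n) =>
    (l + (if ((m : ℤ) - n) % 2 = 0 then ((m : ℤ) - n) / 2
      else if 0 ≤ (m : ℤ) - n then ((m : ℤ) + n + 1) / 2 else -(((m : ℤ) + n + 1) / 2)),
     l - (if ((m : ℤ) - n) % 2 = 0 then ((m : ℤ) - n) / 2
      else if 0 ≤ (m : ℤ) - n then ((m : ℤ) + n + 1) / 2 else -(((m : ℤ) + n + 1) / 2)),
     if ((m : ℤ) - n) % 2 = 0 then (m + n) / 2 else (((m : ℤ) - n).natAbs - 1) / 2)

def gEven : ℤ × ℤ × ℕ → ℤ × ℕ × ℕ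
  | (x, y, k) =>
    if ((x - y) / 2).natAbs ≤ k then
      ((x + y) / 2, ((k : ℤ) + (x - y) / 2).toNat, ((k : ℤ) - (x - y) / 2).toNat)
    else if 0 ≤ (x - y) / 2 then
      ((x + y) / 2, ((x - y) / 2 + k).toNat, ((x - y) / 2 - k - 1).toNat)
    else ((x + y) / 2, (-((x - y) / 2) - k - 1).toNat, (-((x - y) / 2) + k).toNat)

lemma fEven_mem (N l : ℤ) (m n : ℕ) (h : N = 2 * l ^ 2 + 2 * (tri m : ℤ) + 2 * (tri n : ℤ)) :
    N = (fEven (l, m, n)).1 ^ 2 + (fEven (l, m, n)).2.1 ^ 2 + 4 * tri (fEven (l, m, n)).2.2 := by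
  simp only [fEven]
  split_ifs with h1 h2
  · set v : ℤ := ((m : ℤ) - n) / 2 with hv
    set K : ℕ := (m + n) / 2 with hK
    have hm : (m : ℤ) = K + v := by omega
    have hn : (n : ℤ) = K - v := by omega
    have htm := tri_cast m; have htn := tri_cast n; have htK := tri_cast K
    rw [hm] at htm; rw [hn] at htn
    linear_combination h + htm + htn - 2 * htK
  · set v : ℤ := ((m : ℤ) + n + 1) / 2 with hv
    set K : ℕ := (((m : ℤ) - n).natAbs - 1) / 2 with hK
    have hm : (m : ℤ) = v + K := by omega
    have hn : (n : ℤ) = v - K - 1 := by omega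
    have htm := tri_cast m; have htn := tri_cast n; have htK := tri_cast K
    rw [hm] at htm; rw [hn] at htn
    linear_combination h + htm + htn - 2 * htK
  · set A : ℤ := ((m : ℤ) + n + 1) / 2 with hA
    set K : ℕ := (((m : ℤ) - n).natAbs - 1) / 2 with hK
    have hm : (m : ℤ) = A - K - 1 := by omega
    have hn : (n : ℤ) = A + K := by omega
    have htm := tri_cast m; have htn := tri_cast n; have htK := tri_cast K
    rw [hm] at htm; rw [hn] at htn
    linear_combination h + htm + htn - 2 * htK

lemma gEven_mem (N : ℕ) (x y : ℤ) (k : ℕ) (hN : N % 2 = 0)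
    (h : (N : ℤ) = x ^ 2 + y ^ 2 + 4 * (tri k : ℤ)) :
    (N : ℤ) = 2 * (gEven (x, y, k)).1 ^ 2 + 2 * (tri (gEven (x, y, k)).2.1 : ℤ)
      + 2 * (tri (gEven (x, y, k)).2.2 : ℤ) := by
  have hpar : (x - y) % 2 = 0 := by
    have hx := sq_mod_info x; have hy := sq_mod_info y
    omega
  simp only [gEven]
  have hl : ((x + y) / 2) * 2 = x + y := by omega
  have hv : ((x - y) / 2) * 2 = x - y := by omega
  set l : ℤ := (x + y) / 2 with hldef
  set v : ℤ := (x - y) / 2 with hvdef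
  have h' : (N : ℤ) = (l + v) ^ 2 + (l - v) ^ 2 + 4 * (tri k : ℤ) := by
    linear_combination h + (x + l + v) * (by linarith [hl, hv] : x = l + v)
      + (y + l - v) * (by linarith [hl, hv] : y = l - v)
  split_ifs with h1 h2
  · have hm : ((((k : ℤ) + v).toNat : ℕ) : ℤ) = (k : ℤ) + v := by omega
    have hn : ((((k : ℤ) - v).toNat : ℕ) : ℤ) = (k : ℤ) - v := by omega
    have htm := tri_cast ((k : ℤ) + v).toNat
    have htn := tri_cast ((k : ℤ) - v).toNat
    have htk := tri_cast k
    rw [hm] at htm; rw [hn] at htn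
    linear_combination h' - htm - htn + 2 * htk
  · have hm : (((v + (k : ℤ)).toNat : ℕ) : ℤ) = v + k := by omega
    have hn : (((v - (k : ℤ) - 1).toNat : ℕ) : ℤ) = v - k - 1 := by omega
    have htm := tri_cast (v + (k : ℤ)).toNat
    have htn := tri_cast (v - (k : ℤ) - 1).toNat
    have htk := tri_cast k
    rw [hm] at htm; rw [hn] at htn
    linear_combination h' - htm - htn + 2 * htk
  · have hm : (((-v - (k : ℤ) - 1).toNat : ℕ) : ℤ) = -v - k - 1 := by omega
    have hn : (((-v + (k : ℤ)).toNat : ℕ) : ℤ) = -v + k := by omega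
    have htm := tri_cast (-v - (k : ℤ) - 1).toNat
    have htn := tri_cast (-v + (k : ℤ)).toNat
    have htk := tri_cast k
    rw [hm] at htm; rw [hn] at htn
    linear_combination h' - htm - htn + 2 * htk

lemma gEven_fEven (l : ℤ) (m n : ℕ) : gEven (fEven (l, m, n)) = (l, m, n) := by
  simp only [fEven]
  split_ifs
  all_goals simp only [gEven]
  all_goals split_ifs
  all_goals simp only [Prod.mk.injEq]
  all_goals refine ⟨by omega, by omega, by omega⟩

lemma fEven_gEven (N : ℕ) (x y : ℤ) (k : ℕ) (hN : N % 2 = 0)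
    (h : (N : ℤ) = x ^ 2 + y ^ 2 + 4 * (tri k : ℤ)) :
    fEven (gEven (x, y, k)) = (x, y, k) := by
  have hpar : (x - y) % 2 = 0 := by
    have hx := sq_mod_info x; have hy := sq_mod_info y
    omega
  simp only [gEven]
  split_ifs
  all_goals simp only [fEven]
  all_goals split_ifs
  all_goals simp only [Prod.mk.injEq]
  all_goals refine ⟨by omega, by omega, by omega⟩

def fOdd : (Bool × Bool) × ℤ × ℕ × ℕ → ℤ × ℤ × ℕ
  | ((true, true), l, m, j) => (2 * l, 2 * (j : ℤ) + 1, m)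
  | ((true, false), l, m, j) => (2 * l, -(2 * (j : ℤ) + 1), m)
  | ((false, true), l, m, j) => (2 * (j : ℤ) + 1, 2 * l, m)
  | ((false, false), l, m, j) => (-(2 * (j : ℤ) + 1), 2 * l, m)

def gOdd : ℤ × ℤ × ℕ → (Bool × Bool) × ℤ × ℕ × ℕ
  | (x, y, m) =>
    if x % 2 = 0 then ((true, decide (0 ≤ y)), x / 2, m, (y.natAbs - 1) / 2)
    else ((false, decide (0 ≤ x)), y / 2, m, (x.natAbs - 1) / 2)

lemma fOdd_mem (N l : ℤ) (m j : ℕ) (s e : Bool)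
    (h : N - 1 = 4 * l ^ 2 + 4 * (tri m : ℤ) + 8 * (tri j : ℤ)) :
    N = (fOdd ((s, e), l, m, j)).1 ^ 2 + (fOdd ((s, e), l, m, j)).2.1 ^ 2
      + 4 * tri (fOdd ((s, e), l, m, j)).2.2 := by
  cases s <;> cases e <;> simp only [fOdd] <;> linear_combination h + 4 * tri_cast j

lemma gOdd_mem (N : ℕ) (x y : ℤ) (m : ℕ) (hN : N % 4 = 1)
    (h : (N : ℤ) = x ^ 2 + y ^ 2 + 4 * (tri m : ℤ)) :
    (N : ℤ) - 1 = 4 * (gOdd (x, y, m)).2.1 ^ 2 + 4 * (tri (gOdd (x, y, m)).2.2.1 : ℤ)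
      + 8 * (tri (gOdd (x, y, m)).2.2.2 : ℤ) := by
  have hsx := sq_mod_info x; have hsy := sq_mod_info y
  simp only [gOdd]
  split_ifs with hx
  · -- x even, y odd
    have hy1 : y % 2 = 1 := by omega
    have he : x = 2 * (x / 2) := by omega
    set c : ℕ := (y.natAbs - 1) / 2 with hc
    have hcc : (y.natAbs : ℤ) = 2 * (c : ℤ) + 1 := by omega
    have hysq : ((y.natAbs : ℤ)) ^ 2 = y ^ 2 := by
      rw [← Int.abs_eq_natAbs, sq_abs]
    rw [hcc] at hysq
    linear_combination h + (x + 2 * (x / 2)) * he - hysq - 4 * tri_cast c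
  · -- x odd, y even
    have hx1 : x % 2 = 1 := by omega
    have hy0 : y % 2 = 0 := by omega
    have he : y = 2 * (y / 2) := by omega
    set c : ℕ := (x.natAbs - 1) / 2 with hc
    have hcc : (x.natAbs : ℤ) = 2 * (c : ℤ) + 1 := by omega
    have hxsq : ((x.natAbs : ℤ)) ^ 2 = x ^ 2 := by
      rw [← Int.abs_eq_natAbs, sq_abs]
    rw [hcc] at hxsq
    linear_combination h + (y + 2 * (y / 2)) * he - hxsq - 4 * tri_cast c

lemma gOdd_fOdd (l : ℤ) (m j : ℕ) (s e : Bool) :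
    gOdd (fOdd ((s, e), l, m, j)) = ((s, e), l, m, j) := by
  cases s <;> cases e <;> simp only [fOdd] <;> simp only [gOdd] <;> split_ifs <;>
    first
      | (exfalso; omega)
      | (simp only [Prod.mk.injEq, decide_eq_true_eq, decide_eq_false_iff_not,
          eq_self_iff_true, true_and, and_true] <;> omega)

lemma fOdd_gOdd (N : ℕ) (x y : ℤ) (m : ℕ) (hN : N % 4 = 1)
    (h : (N : ℤ) = x ^ 2 + y ^ 2 + 4 * (tri m : ℤ)) :
    fOdd (gOdd (x, y, m)) = (x, y, m) := by
  have hsx := sq_mod_info x; have hsy := sq_mod_info y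
  simp only [gOdd]
  split_ifs with hx
  · have hy1 : y % 2 = 1 := by omega
    cases h0 : decide (0 ≤ y) with
    | true =>
      have h0' : 0 ≤ y := of_decide_eq_true h0
      simp only [fOdd, Prod.mk.injEq, eq_self_iff_true, and_true]
      omega
    | false =>
      have h0' : ¬0 ≤ y := of_decide_eq_false h0
      simp only [fOdd, Prod.mk.injEq, eq_self_iff_true, and_true]
      omega
  · have hx1 : x % 2 = 1 := by omega
    have hy0 : y % 2 = 0 := by omega
    cases h0 : decide (0 ≤ x) with
    | true =>
      have h0' : 0 ≤ x := of_decide_eq_true h0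
      simp only [fOdd, Prod.mk.injEq, eq_self_iff_true, and_true]
      omega
    | false =>
      have h0' : ¬0 ≤ x := of_decide_eq_false h0
      simp only [fOdd, Prod.mk.injEq, eq_self_iff_true, and_true]
      omega

theorem stmt1 (N : ℕ) :
    (N % 2 = 0 → RtCount 1 1 4 (N : ℤ) = rTCount 2 2 2 (N : ℤ)) ∧
    (N % 4 = 1 → RtCount 1 1 4 (N : ℤ) = 4 * rTCount 4 4 8 ((N : ℤ) - 1)) ∧
    (N % 4 = 3 → RtCount 1 1 4 (N : ℤ) = 0) := by
  refine ⟨?_, ?_, ?_⟩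
  · intro hN
    rw [RtCount, rTCount]
    simp only [Nat.cast_one, Nat.cast_ofNat, one_mul]
    have hmapsf : Set.MapsTo fEven
        {x : ℤ × ℕ × ℕ | (N : ℤ) = 2 * x.1 ^ 2 + 2 * (tri x.2.1 : ℤ) + 2 * (tri x.2.2 : ℤ)}
        {x : ℤ × ℤ × ℕ | (N : ℤ) = x.1 ^ 2 + x.2.1 ^ 2 + 4 * (tri x.2.2 : ℤ)} := by
      rintro ⟨l, m, n⟩ h
      exact fEven_mem _ _ _ _ h
    have hmapsg : Set.MapsTo gEven
        {x : ℤ × ℤ × ℕ | (N : ℤ) = x.1 ^ 2 + x.2.1 ^ 2 + 4 * (tri x.2.2 : ℤ)}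
        {x : ℤ × ℕ × ℕ | (N : ℤ) = 2 * x.1 ^ 2 + 2 * (tri x.2.1 : ℤ) + 2 * (tri x.2.2 : ℤ)} := by
      rintro ⟨x, y, k⟩ h
      exact gEven_mem N x y k hN h
    have hinv : Set.InvOn gEven fEven
        {x : ℤ × ℕ × ℕ | (N : ℤ) = 2 * x.1 ^ 2 + 2 * (tri x.2.1 : ℤ) + 2 * (tri x.2.2 : ℤ)}
        {x : ℤ × ℤ × ℕ | (N : ℤ) = x.1 ^ 2 + x.2.1 ^ 2 + 4 * (tri x.2.2 : ℤ)} := by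
      constructor
      · rintro ⟨l, m, n⟩ _
        exact gEven_fEven l m n
      · rintro ⟨x, y, k⟩ hq
        exact fEven_gEven N x y k hN hq
    have hbij := hinv.bijOn hmapsf hmapsg
    rw [← Nat.card_coe_set_eq, ← Nat.card_coe_set_eq]
    exact Nat.card_congr (hbij.equiv _).symm
  · intro hN
    rw [RtCount, rTCount]
    simp only [Nat.cast_one, Nat.cast_ofNat, one_mul]
    have hmapsf : Set.MapsTo fOdd
        (Set.univ ×ˢ {x : ℤ × ℕ × ℕ |
          (N : ℤ) - 1 = 4 * x.1 ^ 2 + 4 * (tri x.2.1 : ℤ) + 8 * (tri x.2.2 : ℤ)})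
        {x : ℤ × ℤ × ℕ | (N : ℤ) = x.1 ^ 2 + x.2.1 ^ 2 + 4 * (tri x.2.2 : ℤ)} := by
      rintro ⟨⟨s, e⟩, l, m, j⟩ h
      exact fOdd_mem _ _ _ _ s e h.2
    have hmapsg : Set.MapsTo gOdd
        {x : ℤ × ℤ × ℕ | (N : ℤ) = x.1 ^ 2 + x.2.1 ^ 2 + 4 * (tri x.2.2 : ℤ)}
        (Set.univ ×ˢ {x : ℤ × ℕ × ℕ |
          (N : ℤ) - 1 = 4 * x.1 ^ 2 + 4 * (tri x.2.1 : ℤ) + 8 * (tri x.2.2 : ℤ)}) := by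
      rintro ⟨x, y, m⟩ h
      exact ⟨trivial, gOdd_mem N x y m hN h⟩
    have hinv : Set.InvOn gOdd fOdd
        (Set.univ ×ˢ {x : ℤ × ℕ × ℕ |
          (N : ℤ) - 1 = 4 * x.1 ^ 2 + 4 * (tri x.2.1 : ℤ) + 8 * (tri x.2.2 : ℤ)})
        {x : ℤ × ℤ × ℕ | (N : ℤ) = x.1 ^ 2 + x.2.1 ^ 2 + 4 * (tri x.2.2 : ℤ)} := by
      constructor
      · rintro ⟨⟨s, e⟩, l, m, j⟩ _
        exact gOdd_fOdd l m j s e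
      · rintro ⟨x, y, m⟩ hq
        exact fOdd_gOdd N x y m hN hq
    have hbij := hinv.bijOn hmapsf hmapsg
    rw [← Nat.card_coe_set_eq, ← Nat.card_coe_set_eq]
    rw [Nat.card_congr (hbij.equiv _).symm]
    rw [Nat.card_congr (Equiv.Set.prod _ _), Nat.card_prod]
    congr 1
    rw [Nat.card_congr (Equiv.Set.univ _)]
    simp [Nat.card_eq_fintype_card]
  · intro hN
    rw [RtCount]
    convert Set.ncard_empty (ℤ × ℤ × ℕ)
    rw [Set.eq_empty_iff_forall_notMem]
    rintro ⟨x, y, n⟩ h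
    simp only [Set.mem_setOf_eq] at h
    push_cast at h
    have hx := sq_mod_info x; have hy := sq_mod_info y
    omega
end

section
/- For each non-negative integer N: G(1,1,2;2N) = Rg(3,6,2;N) + 2·rtp(3,12,4;N−1) and G(1,1,2;2N+1) = 2·Tp(3,6,1;N). -/
private def Es (N : ℕ) : Set (ℤ × ℤ × ℤ) :=
  {p | p.1 ^ 2 + p.2.1 ^ 2 + 2 * p.2.2 ^ 2 = 6 * (N : ℤ) + 4 ∧
    p.1 % 3 = 1 ∧ p.2.1 % 3 = 1 ∧ p.2.2 % 3 = 1}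

private def Fs (N : ℕ) : Set (ℤ × ℤ × ℤ) :=
  {p | p.1 ^ 2 + p.2.1 ^ 2 + p.2.2 ^ 2 = 3 * (N : ℤ) + 2 ∧
    p.1 % 3 = 1 ∧ p.2.1 % 3 = 0 ∧ p.2.2 % 3 = 1}

private def F0s (N : ℕ) : Set (ℤ × ℤ × ℤ) := {p | p ∈ Fs N ∧ (p.1 + p.2.2) % 2 = 0}
private def F1ps (N : ℕ) : Set (ℤ × ℤ × ℤ) :=
  {p | p ∈ Fs N ∧ (p.1 + p.2.2) % 2 = 1 ∧ p.2.2 < p.1}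
private def F1ms (N : ℕ) : Set (ℤ × ℤ × ℤ) :=
  {p | p ∈ Fs N ∧ (p.1 + p.2.2) % 2 = 1 ∧ p.1 < p.2.2}

private lemma two_tri (m : ℕ) : 2 * tri m = m * (m + 1) :=
  Nat.mul_div_cancel' (Nat.even_mul_succ_self m).two_dvd

private lemma two_pent (n : ℤ) : 2 * pent n = n * (3 * n + 1) := by
  unfold pent
  apply Int.mul_ediv_cancel'
  rcases Int.even_or_odd n with ⟨k, hk⟩ | ⟨k, hk⟩
  · exact ⟨k * (3 * n + 1), by rw [hk]; ring⟩
  · exact ⟨n * (3 * k + 2), by rw [hk]; ring⟩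

private lemma sq_emod_two (x : ℤ) : x ^ 2 % 2 = x % 2 := by
  rcases Int.even_or_odd x with ⟨k, hk⟩ | ⟨k, hk⟩ <;> subst hk
  · have : (k + k) ^ 2 = 2 * (2 * k ^ 2) := by ring
    omega
  · have : (2 * k + 1) ^ 2 = 2 * (2 * k ^ 2 + 2 * k) + 1 := by ring
    omega

private lemma mod2_sq_sum {x y z w : ℤ} (h : x ^ 2 + y ^ 2 + 2 * z ^ 2 = w) :
    (x + y) % 2 = w % 2 := by
  have hx := sq_emod_two x
  have hy := sq_emod_two y
  omega

private lemma bound_of_sq_le {x M : ℤ} (h : x ^ 2 ≤ M) : -M ≤ x ∧ x ≤ M := by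
  have h1 : 2 * x ≤ M + 1 := by nlinarith [sq_nonneg (x - 1)]
  have h2 : -(M + 1) ≤ 2 * x := by nlinarith [sq_nonneg (x + 1)]
  have h0 : 0 ≤ M := le_trans (sq_nonneg x) h
  omega

private lemma finite_quad (S : Set (ℤ × ℤ × ℤ)) (M : ℤ)
    (h : ∀ p ∈ S, p.1 ^ 2 ≤ M ∧ p.2.1 ^ 2 ≤ M ∧ p.2.2 ^ 2 ≤ M) : S.Finite := by
  apply Set.Finite.subset (Set.finite_Icc ((-M, -M, -M) : ℤ × ℤ × ℤ) (M, M, M))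
  intro p hp
  obtain ⟨h1, h2, h3⟩ := h p hp
  obtain ⟨a1, a2⟩ := bound_of_sq_le h1
  obtain ⟨b1, b2⟩ := bound_of_sq_le h2
  obtain ⟨c1, c2⟩ := bound_of_sq_le h3
  simp only [Set.mem_Icc, Prod.le_def]
  exact ⟨⟨a1, b1, c1⟩, ⟨a2, b2, c2⟩⟩

private lemma Fs_finite (N : ℕ) : (Fs N).Finite := by
  apply finite_quad _ (3 * (N : ℤ) + 2)
  rintro ⟨u, v, z⟩ ⟨heq, -, -, -⟩
  refine ⟨?_, ?_, ?_⟩ <;> nlinarith [sq_nonneg u, sq_nonneg v, sq_nonneg z]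

private lemma step1 (N : ℕ) : GCount 1 1 2 (2 * N : ℤ) = (Es N).ncard := by
  unfold GCount
  simp only [Nat.cast_one, Nat.cast_ofNat]
  have himg : Es N =
      (fun q : ℤ × ℤ × ℤ => (3 * q.1 + 1, 3 * q.2.1 + 1, 3 * q.2.2 + 1)) ''
      {x : ℤ × ℤ × ℤ | (2 * N : ℤ) = 1 * oct x.1 + 1 * oct x.2.1 + 2 * oct x.2.2} := by
    ext ⟨x, y, z⟩
    simp only [Es, Set.mem_setOf_eq, Set.mem_image, Prod.exists, Prod.mk.injEq, oct]
    constructor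
    · rintro ⟨heq, hx, hy, hz⟩
      obtain ⟨l, hl⟩ : ∃ l, x = 3 * l + 1 := ⟨(x - 1) / 3, by omega⟩
      obtain ⟨m, hm⟩ : ∃ m, y = 3 * m + 1 := ⟨(y - 1) / 3, by omega⟩
      obtain ⟨n, hn⟩ : ∃ n, z = 3 * n + 1 := ⟨(z - 1) / 3, by omega⟩
      refine ⟨l, m, n, ?_, hl.symm, hm.symm, hn.symm⟩
      have hx2 : x ^ 2 = (3 * l + 1) ^ 2 := by rw [hl]
      have hy2 : y ^ 2 = (3 * m + 1) ^ 2 := by rw [hm]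
      have hz2 : z ^ 2 = (3 * n + 1) ^ 2 := by rw [hn]
      have h3 : (3 : ℤ) * (2 * N) =
          3 * (1 * (l * (3 * l + 2)) + 1 * (m * (3 * m + 2)) + 2 * (n * (3 * n + 2))) := by
        linear_combination -heq + hx2 + hy2 + 2 * hz2
      exact mul_left_cancel₀ (by norm_num : (3 : ℤ) ≠ 0) h3
    · rintro ⟨l, m, n, heq, rfl, rfl, rfl⟩
      refine ⟨by linear_combination (-3) * heq, by omega, by omega, by omega⟩
  rw [himg, Set.ncard_image_of_injOn]
  rintro ⟨a, b, c⟩ - ⟨a', b', c'⟩ - h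
  simp only [Prod.mk.injEq] at h ⊢
  omega

private lemma step2 (N : ℕ) : (Es N).ncard = (Fs N).ncard := by
  have himg : Es N = (fun q : ℤ × ℤ × ℤ => (q.1 + q.2.1, q.1 - q.2.1, q.2.2)) '' Fs N := by
    ext ⟨x, y, z⟩
    simp only [Es, Fs, Set.mem_setOf_eq, Set.mem_image, Prod.exists, Prod.mk.injEq]
    constructor
    · rintro ⟨heq, hx, hy, hz⟩
      have hpar : (x + y) % 2 = (6 * (N : ℤ) + 4) % 2 := mod2_sq_sum heq
      obtain ⟨u, hu⟩ : ∃ u, x + y = 2 * u := ⟨(x + y) / 2, by omega⟩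
      refine ⟨u, x - u, z, ⟨?_, by omega, by omega, by omega⟩, by omega, by omega, rfl⟩
      have hx2 : x ^ 2 = (u + (x - u)) ^ 2 := by ring_nf
      have hy2 : y ^ 2 = (u - (x - u)) ^ 2 := by
        have : y = u - (x - u) := by omega
        rw [this]
      have h2 : (2 : ℤ) * (u ^ 2 + (x - u) ^ 2 + z ^ 2) = 2 * (3 * N + 2) := by
        linear_combination heq - hx2 - hy2
      exact mul_left_cancel₀ (by norm_num : (2 : ℤ) ≠ 0) h2
    · rintro ⟨u, v, z', ⟨heq, hu, hv, hz⟩, rfl, rfl, rfl⟩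
      exact ⟨by linear_combination 2 * heq, by omega, by omega, hz⟩
  rw [himg, Set.ncard_image_of_injOn]
  rintro ⟨a, b, c⟩ - ⟨a', b', c'⟩ - h
  simp only [Prod.mk.injEq] at h ⊢
  omega

private lemma step3 (N : ℕ) :
    (Fs N).ncard = (F0s N).ncard + ((F1ps N).ncard + (F1ms N).ncard) := by
  have hun : Fs N = F0s N ∪ (F1ps N ∪ F1ms N) := by
    ext ⟨u, v, z⟩
    simp only [Fs, F0s, F1ps, F1ms, Set.mem_setOf_eq, Set.mem_union]
    constructor
    · rintro h
      obtain ⟨heq, hu, hv, hz⟩ := h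
      rcases Int.emod_two_eq (u + z) with hpar | hpar
      · exact Or.inl ⟨⟨heq, hu, hv, hz⟩, hpar⟩
      · have hne : u ≠ z := by omega
        rcases hne.lt_or_gt with hlt | hlt
        · exact Or.inr (Or.inr ⟨⟨heq, hu, hv, hz⟩, hpar, hlt⟩)
        · exact Or.inr (Or.inl ⟨⟨heq, hu, hv, hz⟩, hpar, hlt⟩)
    · rintro (⟨h, -⟩ | ⟨h, -⟩ | ⟨h, -⟩) <;> exact h
  have hd1 : Disjoint (F0s N) (F1ps N ∪ F1ms N) := by
    rw [Set.disjoint_left]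
    rintro ⟨u, v, z⟩ ⟨-, h0⟩ (⟨-, h1, -⟩ | ⟨-, h1, -⟩) <;> omega
  have hd2 : Disjoint (F1ps N) (F1ms N) := by
    rw [Set.disjoint_left]
    rintro ⟨u, v, z⟩ ⟨-, -, h0⟩ ⟨-, -, h1⟩
    omega
  have hsub0 : F0s N ⊆ Fs N := fun p hp => hp.1
  have hsubp : F1ps N ⊆ Fs N := fun p hp => hp.1
  have hsubm : F1ms N ⊆ Fs N := fun p hp => hp.1
  rw [hun, Set.ncard_union_eq hd1 ((Fs_finite N).subset hsub0)
      (((Fs_finite N).subset hsubp).union ((Fs_finite N).subset hsubm)),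
    Set.ncard_union_eq hd2 ((Fs_finite N).subset hsubp) ((Fs_finite N).subset hsubm)]

private lemma step4 (N : ℕ) : (F0s N).ncard = RgCount 3 6 2 (N : ℤ) := by
  unfold RgCount
  simp only [Nat.cast_ofNat]
  have himg : F0s N =
      (fun q : ℤ × ℤ × ℤ => (3 * q.2.2 + 3 * q.2.1 + 1, 3 * q.1, 3 * q.2.2 - 3 * q.2.1 + 1)) ''
      {x : ℤ × ℤ × ℤ | (N : ℤ) = 3 * x.1 ^ 2 + 6 * x.2.1 ^ 2 + 2 * oct x.2.2} := by
    ext ⟨u, v, z⟩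
    simp only [F0s, Fs, Set.mem_setOf_eq, Set.mem_image, Prod.exists, Prod.mk.injEq, oct]
    constructor
    · rintro ⟨⟨hF, hu, hv, hz⟩, hpar⟩
      obtain ⟨n, hn⟩ : ∃ n, u + z = 6 * n + 2 := ⟨(u + z - 2) / 6, by omega⟩
      obtain ⟨m, hm⟩ : ∃ m, u - z = 6 * m := ⟨(u - z) / 6, by omega⟩
      obtain ⟨l, hl⟩ : ∃ l, v = 3 * l := ⟨v / 3, by omega⟩
      refine ⟨l, m, n, ?_, by omega, by omega, by omega⟩
      have hu2 : u ^ 2 = (3 * n + 3 * m + 1) ^ 2 := by rw [show u = 3 * n + 3 * m + 1 by omega]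
      have hz2 : z ^ 2 = (3 * n - 3 * m + 1) ^ 2 := by rw [show z = 3 * n - 3 * m + 1 by omega]
      have hv2 : v ^ 2 = (3 * l) ^ 2 := by rw [hl]
      have h3 : (3 : ℤ) * N = 3 * (3 * l ^ 2 + 6 * m ^ 2 + 2 * (n * (3 * n + 2))) := by
        linear_combination -hF + hu2 + hv2 + hz2
      have h := mul_left_cancel₀ (by norm_num : (3 : ℤ) ≠ 0) h3
      linear_combination h
    · rintro ⟨l, m, n, heq, rfl, rfl, rfl⟩
      refine ⟨⟨by linear_combination (-3) * heq, by omega, by omega, by omega⟩, by omega⟩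
  rw [himg, Set.ncard_image_of_injOn]
  rintro ⟨a, b, c⟩ - ⟨a', b', c'⟩ - h
  simp only [Prod.mk.injEq] at h ⊢
  omega

private lemma step5 (N : ℕ) : (F1ms N).ncard = (F1ps N).ncard := by
  have himg : F1ms N = (fun q : ℤ × ℤ × ℤ => (q.2.2, q.2.1, q.1)) '' F1ps N := by
    ext ⟨u, v, z⟩
    simp only [F1ms, F1ps, Fs, Set.mem_setOf_eq, Set.mem_image, Prod.exists, Prod.mk.injEq]
    constructor
    · rintro ⟨⟨hF, hu, hv, hz⟩, hpar, hlt⟩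
      exact ⟨z, v, u, ⟨⟨by linear_combination hF, hz, hv, hu⟩, by omega, hlt⟩, rfl, rfl, rfl⟩
    · rintro ⟨a, b, c, ⟨⟨hF, hu, hv, hz⟩, hpar, hlt⟩, rfl, rfl, rfl⟩
      exact ⟨⟨by linear_combination hF, hz, hv, hu⟩, by omega, hlt⟩
  rw [himg, Set.ncard_image_of_injOn]
  rintro ⟨a, b, c⟩ - ⟨a', b', c'⟩ - h
  simp only [Prod.mk.injEq] at h ⊢
  omega

private lemma step6 (N : ℕ) : (F1ps N).ncard = rtpCount 3 12 4 ((N : ℤ) - 1) := by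
  unfold rtpCount
  have himg : F1ps N =
      (fun q : ℤ × ℕ × ℤ =>
        ((3 * (q.2.1 : ℤ) - 3 * q.2.2 + 1, 3 * q.1, -3 * q.2.2 - 3 * (q.2.1 : ℤ) - 2) :
          ℤ × ℤ × ℤ)) ''
      {x : ℤ × ℕ × ℤ | (N : ℤ) - 1 = 3 * x.1 ^ 2 + 12 * (tri x.2.1 : ℤ) + 4 * pent x.2.2} := by
    ext ⟨u, v, z⟩
    simp only [F1ps, Fs, Set.mem_setOf_eq, Set.mem_image, Prod.exists, Prod.mk.injEq]
    constructor
    · rintro ⟨⟨hF, hu, hv, hz⟩, hpar, hlt⟩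
      obtain ⟨m, hm⟩ : ∃ m : ℕ, u - z = 6 * (m : ℤ) + 3 := ⟨((u - z - 3) / 6).toNat, by omega⟩
      obtain ⟨n, hn⟩ : ∃ n : ℤ, u + z = -6 * n - 1 := ⟨(-(u + z) - 1) / 6, by omega⟩
      obtain ⟨l, hl⟩ : ∃ l : ℤ, v = 3 * l := ⟨v / 3, by omega⟩
      refine ⟨l, m, n, ?_, by omega, by omega, by omega⟩
      have hT : 2 * ((tri m : ℕ) : ℤ) = (m : ℤ) * ((m : ℤ) + 1) := by exact_mod_cast two_tri m
      have hP := two_pent n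
      have hu2 : u ^ 2 = (3 * (m : ℤ) - 3 * n + 1) ^ 2 := by
        rw [show u = 3 * (m : ℤ) - 3 * n + 1 by omega]
      have hz2 : z ^ 2 = (-3 * n - 3 * (m : ℤ) - 2) ^ 2 := by
        rw [show z = -3 * n - 3 * (m : ℤ) - 2 by omega]
      have hv2 : v ^ 2 = (3 * l) ^ 2 := by rw [hl]
      have h6 : (6 : ℤ) * ((N : ℤ) - 1) =
          6 * (3 * l ^ 2 + 12 * ((tri m : ℕ) : ℤ) + 4 * pent n) := by
        linear_combination (-2) * hF + 2 * hu2 + 2 * hv2 + 2 * hz2 - 36 * hT - 12 * hP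
      have h := mul_left_cancel₀ (by norm_num : (6 : ℤ) ≠ 0) h6
      linear_combination h
    · rintro ⟨l, m, n, heq, rfl, rfl, rfl⟩
      have hT : 2 * ((tri m : ℕ) : ℤ) = (m : ℤ) * ((m : ℤ) + 1) := by exact_mod_cast two_tri m
      have hP := two_pent n
      refine ⟨⟨?_, by omega, by omega, by omega⟩, by omega, by omega⟩
      have h2 : (2 : ℤ) * ((3 * (m : ℤ) - 3 * n + 1) ^ 2 + (3 * l) ^ 2 +
          (-3 * n - 3 * (m : ℤ) - 2) ^ 2) = 2 * (3 * (N : ℤ) + 2) := by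
        linear_combination (-6) * heq - 36 * hT - 12 * hP
      linear_combination mul_left_cancel₀ (by norm_num : (2 : ℤ) ≠ 0) h2
  have hset : {x : ℤ × ℕ × ℤ | ((N : ℤ) - 1) = 3 * x.1 ^ 2 + 12 * (tri x.2.1 : ℤ) + 4 * pent x.2.2} =
      {x : ℤ × ℕ × ℤ | ((N : ℤ) - 1) = (3:ℕ) * x.1 ^ 2 + (12:ℕ) * (tri x.2.1) + (4:ℕ) * pent x.2.2} := by
    ext ⟨l, m, n⟩
    simp only [Set.mem_setOf_eq]
    constructor <;> intro h
    · push_cast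
      linear_combination h
    · push_cast at h
      linear_combination h
  rw [himg, Set.ncard_image_of_injOn, hset]
  rintro ⟨a, b, c⟩ - ⟨a', b', c'⟩ - h
  simp only [Prod.mk.injEq] at h ⊢
  refine ⟨by omega, by omega, by omega⟩

private lemma part1 (N : ℕ) :
    GCount 1 1 2 (2 * N : ℤ) =
      RgCount 3 6 2 (N : ℤ) + 2 * rtpCount 3 12 4 ((N : ℤ) - 1) := by
  rw [step1, step2, step3, step4, step5, step6]
  ring

private def E's (N : ℕ) : Set (ℤ × ℤ × ℤ) :=
  {p | p.1 ^ 2 + p.2.1 ^ 2 + 2 * p.2.2 ^ 2 = 6 * (N : ℤ) + 7 ∧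
    p.1 % 3 = 1 ∧ p.2.1 % 3 = 1 ∧ p.2.2 % 3 = 1}

private def E1s (N : ℕ) : Set (ℤ × ℤ × ℤ) := {p | p ∈ E's N ∧ p.1 % 2 = 0}
private def E2s (N : ℕ) : Set (ℤ × ℤ × ℤ) := {p | p ∈ E's N ∧ p.1 % 2 = 1}

private def Ss (N : ℕ) : Set (ℤ × ℤ × ℤ) :=
  {p | p.1 % 2 = 1 ∧ p.2.1 % 2 = 1 ∧ p.2.2 % 6 = 1 ∧
    (p.2.2 - 3 * p.1 - 6 * p.2.1) % 8 = 0 ∧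
    9 * p.1 ^ 2 + 18 * p.2.1 ^ 2 + p.2.2 ^ 2 = 24 * (N : ℤ) + 28}

private def Rts (N : ℕ) : Set (ℤ × ℤ × ℤ) :=
  {p | p.1 % 2 = 1 ∧ 0 < p.1 ∧ p.2.1 % 2 = 1 ∧ 0 < p.2.1 ∧ p.2.2 % 6 = 1 ∧
    9 * p.1 ^ 2 + 18 * p.2.1 ^ 2 + p.2.2 ^ 2 = 24 * (N : ℤ) + 28}

private lemma E's_finite (N : ℕ) : (E's N).Finite := by
  apply finite_quad _ (6 * (N : ℤ) + 7)
  rintro ⟨u, v, z⟩ ⟨heq, -, -, -⟩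
  refine ⟨?_, ?_, ?_⟩ <;> nlinarith [sq_nonneg u, sq_nonneg v, sq_nonneg z]

private lemma s1 (N : ℕ) : GCount 1 1 2 (2 * N + 1 : ℤ) = (E's N).ncard := by
  unfold GCount
  simp only [Nat.cast_one, Nat.cast_ofNat]
  have himg : E's N =
      (fun q : ℤ × ℤ × ℤ => (3 * q.1 + 1, 3 * q.2.1 + 1, 3 * q.2.2 + 1)) ''
      {x : ℤ × ℤ × ℤ | (2 * N + 1 : ℤ) = 1 * oct x.1 + 1 * oct x.2.1 + 2 * oct x.2.2} := by
    ext ⟨x, y, z⟩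
    simp only [E's, Set.mem_setOf_eq, Set.mem_image, Prod.exists, Prod.mk.injEq, oct]
    constructor
    · rintro ⟨heq, hx, hy, hz⟩
      obtain ⟨l, hl⟩ : ∃ l, x = 3 * l + 1 := ⟨(x - 1) / 3, by omega⟩
      obtain ⟨m, hm⟩ : ∃ m, y = 3 * m + 1 := ⟨(y - 1) / 3, by omega⟩
      obtain ⟨n, hn⟩ : ∃ n, z = 3 * n + 1 := ⟨(z - 1) / 3, by omega⟩
      refine ⟨l, m, n, ?_, hl.symm, hm.symm, hn.symm⟩
      have hx2 : x ^ 2 = (3 * l + 1) ^ 2 := by rw [hl]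
      have hy2 : y ^ 2 = (3 * m + 1) ^ 2 := by rw [hm]
      have hz2 : z ^ 2 = (3 * n + 1) ^ 2 := by rw [hn]
      have h3 : (3 : ℤ) * (2 * N + 1) =
          3 * (1 * (l * (3 * l + 2)) + 1 * (m * (3 * m + 2)) + 2 * (n * (3 * n + 2))) := by
        linear_combination -heq + hx2 + hy2 + 2 * hz2
      exact mul_left_cancel₀ (by norm_num : (3 : ℤ) ≠ 0) h3
    · rintro ⟨l, m, n, heq, rfl, rfl, rfl⟩
      refine ⟨by linear_combination (-3) * heq, by omega, by omega, by omega⟩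
  rw [himg, Set.ncard_image_of_injOn]
  rintro ⟨a, b, c⟩ - ⟨a', b', c'⟩ - h
  simp only [Prod.mk.injEq] at h ⊢
  omega

private lemma s2 (N : ℕ) : (E's N).ncard = (E1s N).ncard + (E2s N).ncard := by
  have hun : E's N = E1s N ∪ E2s N := by
    ext ⟨x, y, z⟩
    simp only [E1s, E2s, Set.mem_setOf_eq, Set.mem_union]
    constructor
    · intro h
      rcases Int.emod_two_eq x with hp | hp
      · exact Or.inl ⟨h, hp⟩
      · exact Or.inr ⟨h, hp⟩
    · rintro (⟨h, -⟩ | ⟨h, -⟩) <;> exact h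
  have hd : Disjoint (E1s N) (E2s N) := by
    rw [Set.disjoint_left]
    rintro ⟨x, y, z⟩ ⟨-, h0⟩ ⟨-, h1⟩
    omega
  rw [hun, Set.ncard_union_eq hd ((E's_finite N).subset fun p hp => hp.1)
    ((E's_finite N).subset fun p hp => hp.1)]

private lemma s3 (N : ℕ) : (E2s N).ncard = (E1s N).ncard := by
  have himg : E2s N = (fun q : ℤ × ℤ × ℤ => (q.2.1, q.1, q.2.2)) '' E1s N := by
    ext ⟨x, y, z⟩
    simp only [E1s, E2s, E's, Set.mem_setOf_eq, Set.mem_image, Prod.exists, Prod.mk.injEq]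
    constructor
    · rintro ⟨⟨heq, hx, hy, hz⟩, hp⟩
      have hpar : (x + y) % 2 = (6 * (N : ℤ) + 7) % 2 := mod2_sq_sum heq
      exact ⟨y, x, z, ⟨⟨by linear_combination heq, hy, hx, hz⟩, by omega⟩, rfl, rfl, rfl⟩
    · rintro ⟨a, b, c, ⟨⟨heq, ha, hb, hc⟩, hp⟩, rfl, rfl, rfl⟩
      have hpar : (a + b) % 2 = (6 * (N : ℤ) + 7) % 2 := mod2_sq_sum heq
      exact ⟨⟨by linear_combination heq, hb, ha, hc⟩, by omega⟩
  rw [himg, Set.ncard_image_of_injOn]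
  rintro ⟨a, b, c⟩ - ⟨a', b', c'⟩ - h
  simp only [Prod.mk.injEq] at h ⊢
  omega

private lemma s4 (N : ℕ) : (E1s N).ncard = (Ss N).ncard := by
  have himg : Ss N =
      (fun q : ℤ × ℤ × ℤ =>
        ((-q.1 + 2 * q.2.2 - q.2.1) / 3, (q.2.1 - q.1) / 3, q.1 + 2 * q.2.2 + q.2.1)) ''
      E1s N := by
    ext ⟨A, B, c⟩
    simp only [Ss, E1s, E's, Set.mem_setOf_eq, Set.mem_image, Prod.exists, Prod.mk.injEq]
    constructor
    · rintro ⟨h1, h2, h3, h4, h5⟩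
      obtain ⟨x, hx⟩ : ∃ x, c - 3 * A - 6 * B = 4 * x := ⟨(c - 3 * A - 6 * B) / 4, by omega⟩
      obtain ⟨z, hz⟩ : ∃ z, 3 * A + c = 4 * z := ⟨(3 * A + c) / 4, by omega⟩
      obtain ⟨y, hy⟩ : ∃ y, c - 3 * A + 6 * B = 4 * y := ⟨(c - 3 * A + 6 * B) / 4, by omega⟩
      refine ⟨x, y, z, ⟨⟨?_, by omega, by omega, by omega⟩, by omega⟩,
        by omega, by omega, by omega⟩
      have hx2 : (c - 3 * A - 6 * B) ^ 2 = (4 * x) ^ 2 := by rw [hx]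
      have hy2 : (c - 3 * A + 6 * B) ^ 2 = (4 * y) ^ 2 := by rw [hy]
      have hz2 : (3 * A + c) ^ 2 = (4 * z) ^ 2 := by rw [hz]
      have h16 : (16 : ℤ) * (x ^ 2 + y ^ 2 + 2 * z ^ 2) = 16 * (6 * N + 7) := by
        linear_combination -hx2 - hy2 - 2 * hz2 + 4 * h5
      exact mul_left_cancel₀ (by norm_num : (16 : ℤ) ≠ 0) h16
    · rintro ⟨x, y, z, ⟨⟨heq, hx3, hy3, hz3⟩, hx2⟩, rfl, rfl, rfl⟩
      have hpar : (x + y) % 2 = (6 * (N : ℤ) + 7) % 2 := mod2_sq_sum heq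
      obtain ⟨A, hA⟩ : ∃ A, -x + 2 * z - y = 3 * A := ⟨(-x + 2 * z - y) / 3, by omega⟩
      obtain ⟨B, hB⟩ : ∃ B, y - x = 3 * B := ⟨(y - x) / 3, by omega⟩
      have e1 : (-x + 2 * z - y) / 3 = A := by omega
      have e2 : (y - x) / 3 = B := by omega
      rw [e1, e2]
      refine ⟨by omega, by omega, by omega, by omega, ?_⟩
      have hA2 : (3 * A) ^ 2 = (-x + 2 * z - y) ^ 2 := by rw [hA]
      have hB2 : (3 * B) ^ 2 = (y - x) ^ 2 := by rw [hB]
      linear_combination hA2 + 2 * hB2 + 4 * heq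
  rw [himg, Set.ncard_image_of_injOn]
  rintro ⟨x, y, z⟩ ⟨⟨-, hx3, hy3, hz3⟩, -⟩ ⟨x', y', z'⟩ ⟨⟨-, hx3', hy3', hz3'⟩, -⟩ h
  simp only [Prod.mk.injEq] at h ⊢
  obtain ⟨h1, h2, h3⟩ := h
  refine ⟨by omega, by omega, by omega⟩

private lemma s5 (N : ℕ) : (Ss N).ncard = (Rts N).ncard := by
  have himg : Rts N = (fun q : ℤ × ℤ × ℤ => (|q.1|, |q.2.1|, q.2.2)) '' Ss N := by
    ext ⟨a, b, c⟩
    simp only [Rts, Ss, Set.mem_setOf_eq, Set.mem_image, Prod.exists, Prod.mk.injEq]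
    constructor
    · rintro ⟨h1, h2, h3, h4, h5, h6⟩
      have hd : (c - 3 * a - 6 * b) % 8 = 0 ∨ (c - 3 * a + 6 * b) % 8 = 0 ∨
          (c + 3 * a - 6 * b) % 8 = 0 ∨ (c + 3 * a + 6 * b) % 8 = 0 := by
        rcases (by omega : a % 8 = 1 ∨ a % 8 = 3 ∨ a % 8 = 5 ∨ a % 8 = 7) with h | h | h | h <;>
          rcases (by omega : b % 8 = 1 ∨ b % 8 = 3 ∨ b % 8 = 5 ∨ b % 8 = 7) with h' | h' | h' | h' <;>
          rcases (by omega : c % 8 = 1 ∨ c % 8 = 3 ∨ c % 8 = 5 ∨ c % 8 = 7) with h'' | h'' | h'' | h'' <;>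
          omega
      rcases hd with hd | hd | hd | hd
      · exact ⟨a, b, c, ⟨h1, h3, h5, by omega, h6⟩,
          abs_of_pos h2, abs_of_pos h4, rfl⟩
      · refine ⟨a, -b, c, ⟨h1, by omega, h5, by omega, by linear_combination h6⟩,
          abs_of_pos h2, by rw [abs_neg]; exact abs_of_pos h4, rfl⟩
      · refine ⟨-a, b, c, ⟨by omega, h3, h5, by omega, by linear_combination h6⟩,
          by rw [abs_neg]; exact abs_of_pos h2, abs_of_pos h4, rfl⟩
      · refine ⟨-a, -b, c, ⟨by omega, by omega, h5, by omega, by linear_combination h6⟩,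
          by rw [abs_neg]; exact abs_of_pos h2, by rw [abs_neg]; exact abs_of_pos h4, rfl⟩
    · rintro ⟨A, B, c', ⟨h1, h2, h3, h4, h5⟩, rfl, rfl, rfl⟩
      have hA : |A| = A ∨ |A| = -A := abs_choice A
      have hB : |B| = B ∨ |B| = -B := abs_choice B
      refine ⟨?_, ?_, ?_, ?_, h3, ?_⟩
      · rcases hA with h | h <;> omega
      · have : A ≠ 0 := by omega
        exact abs_pos.mpr this
      · rcases hB with h | h <;> omega
      · have : B ≠ 0 := by omega
        exact abs_pos.mpr this
      · rw [sq_abs, sq_abs]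
        exact h5
  rw [himg, Set.ncard_image_of_injOn]
  rintro ⟨A, B, c⟩ hm ⟨A', B', c'⟩ hm' h
  simp only [Ss, Set.mem_setOf_eq] at hm hm'
  obtain ⟨hA1, hB1, -, hm8, -⟩ := hm
  obtain ⟨hA1', hB1', -, hm8', -⟩ := hm'
  simp only [Prod.mk.injEq] at h ⊢
  obtain ⟨h1, h2, h3⟩ := h
  have e1 : A = A' ∨ A = -A' := abs_eq_abs.mp h1
  have e2 : B = B' ∨ B = -B' := abs_eq_abs.mp h2
  rcases e1 with e1 | e1 <;> rcases e2 with e2 | e2 <;>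
    exact ⟨by omega, by omega, h3⟩

private lemma s6 (N : ℕ) : (Rts N).ncard = TpCount 3 6 1 (N : ℤ) := by
  unfold TpCount
  have himg : Rts N =
      (fun q : ℕ × ℕ × ℤ =>
        ((2 * (q.1 : ℤ) + 1, 2 * (q.2.1 : ℤ) + 1, 6 * q.2.2 + 1) : ℤ × ℤ × ℤ)) ''
      {x : ℕ × ℕ × ℤ | (N : ℤ) =
        3 * (tri x.1 : ℤ) + 6 * (tri x.2.1 : ℤ) + 1 * pent x.2.2} := by
    ext ⟨a, b, c⟩
    simp only [Rts, Set.mem_setOf_eq, Set.mem_image, Prod.exists, Prod.mk.injEq]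
    constructor
    · rintro ⟨h1, h2, h3, h4, h5, h6⟩
      obtain ⟨l, hl⟩ : ∃ l : ℕ, a = 2 * (l : ℤ) + 1 := ⟨((a - 1) / 2).toNat, by omega⟩
      obtain ⟨m, hm⟩ : ∃ m : ℕ, b = 2 * (m : ℤ) + 1 := ⟨((b - 1) / 2).toNat, by omega⟩
      obtain ⟨n, hn⟩ : ∃ n : ℤ, c = 6 * n + 1 := ⟨(c - 1) / 6, by omega⟩
      refine ⟨l, m, n, ?_, by omega, by omega, by omega⟩
      have hTl : 2 * ((tri l : ℕ) : ℤ) = (l : ℤ) * ((l : ℤ) + 1) := by exact_mod_cast two_tri l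
      have hTm : 2 * ((tri m : ℕ) : ℤ) = (m : ℤ) * ((m : ℤ) + 1) := by exact_mod_cast two_tri m
      have hP := two_pent n
      have ha2 : a ^ 2 = (2 * (l : ℤ) + 1) ^ 2 := by rw [hl]
      have hb2 : b ^ 2 = (2 * (m : ℤ) + 1) ^ 2 := by rw [hm]
      have hc2 : c ^ 2 = (6 * n + 1) ^ 2 := by rw [hn]
      have h24 : (24 : ℤ) * N =
          24 * (3 * ((tri l : ℕ) : ℤ) + 6 * ((tri m : ℕ) : ℤ) + 1 * pent n) := by
        linear_combination -h6 + 9 * ha2 + 18 * hb2 + hc2 - 36 * hTl - 72 * hTm - 12 * hP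
      exact mul_left_cancel₀ (by norm_num : (24 : ℤ) ≠ 0) h24
    · rintro ⟨l, m, n, heq, rfl, rfl, rfl⟩
      have hTl : 2 * ((tri l : ℕ) : ℤ) = (l : ℤ) * ((l : ℤ) + 1) := by exact_mod_cast two_tri l
      have hTm : 2 * ((tri m : ℕ) : ℤ) = (m : ℤ) * ((m : ℤ) + 1) := by exact_mod_cast two_tri m
      have hP := two_pent n
      refine ⟨by omega, by omega, by omega, by omega, by omega, ?_⟩
      linear_combination (-24) * heq - 36 * hTl - 72 * hTm - 12 * hP
  have hset : {x : ℕ × ℕ × ℤ | (N : ℤ) =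
      3 * (tri x.1 : ℤ) + 6 * (tri x.2.1 : ℤ) + 1 * pent x.2.2} =
      {x : ℕ × ℕ × ℤ | (N : ℤ) =
        (3 : ℕ) * tri x.1 + (6 : ℕ) * tri x.2.1 + (1 : ℕ) * pent x.2.2} := by
    ext ⟨l, m, n⟩
    simp only [Set.mem_setOf_eq]
    constructor <;> intro h
    · push_cast
      linear_combination h
    · push_cast at h
      linear_combination h
  rw [himg, Set.ncard_image_of_injOn, hset]
  rintro ⟨a, b, c⟩ - ⟨a', b', c'⟩ - h
  simp only [Prod.mk.injEq] at h ⊢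
  refine ⟨by omega, by omega, by omega⟩

private lemma part2 (N : ℕ) : GCount 1 1 2 (2 * N + 1 : ℤ) = 2 * TpCount 3 6 1 (N : ℤ) := by
  rw [s1, s2, s3, s4, s5, s6]
  ring

theorem stmt6 (N : ℕ) :
    GCount 1 1 2 (2 * N : ℤ) =
      RgCount 3 6 2 (N : ℤ) + 2 * rtpCount 3 12 4 ((N : ℤ) - 1) ∧
    GCount 1 1 2 (2 * N + 1 : ℤ) = 2 * TpCount 3 6 1 (N : ℤ) := by
  exact ⟨part1 N, part2 N⟩
end

section
/- For each non-negative integer N: tG(12,1,1;2N) = rtg(3,6,1;N); tG(12,1,1;4N+1) = 2·tpg(3,2,1;N); and tG(12,1,1;4N+3) = 0. -/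
lemma tri_two (n : ℕ) : 2 * tri n = n * (n + 1) := by
  have h : 2 ∣ n * (n + 1) := (Nat.even_mul_succ_self n).two_dvd
  exact Nat.mul_div_cancel' h

lemma tri_two' (n : ℕ) : 2 * (tri n : ℤ) = (n : ℤ) ^ 2 + n := by
  have h : ((2 * tri n : ℕ) : ℤ) = ((n * (n + 1) : ℕ) : ℤ) := by rw [tri_two n]
  push_cast at h
  linear_combination h

lemma pent_two (n : ℤ) : 2 * pent n = 3 * n ^ 2 + n := by
  unfold pent
  rcases Int.even_or_odd n with ⟨j, hj⟩ | ⟨j, hj⟩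
  · subst hj
    rw [show (j + j) * (3 * (j + j) + 1) = 2 * (j * (6 * j + 1)) by ring,
      Int.mul_ediv_cancel_left _ two_ne_zero]
    ring
  · subst hj
    rw [show (2 * j + 1) * (3 * (2 * j + 1) + 1) = 2 * ((2 * j + 1) * (3 * j + 2)) by ring,
      Int.mul_ediv_cancel_left _ two_ne_zero]
    ring

lemma oct4 (m : ℤ) :
    (∃ u j, m = 2 * u ∧ oct m = 4 * j) ∨ (∃ u j, m = 2 * u + 1 ∧ oct m = 4 * j + 1) := by
  rcases Int.even_or_odd m with ⟨j, hj⟩ | ⟨j, hj⟩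
  · exact Or.inl ⟨j, 3 * j ^ 2 + j, by omega, by subst hj; unfold oct; ring⟩
  · exact Or.inr ⟨j, 3 * j ^ 2 + 4 * j + 1, by omega, by subst hj; unfold oct; ring⟩

lemma lem1 (T a k : ℤ) : 12 * T + oct (k + a) + oct (k - a) = 2 * (3 * a ^ 2 + 6 * T + oct k) := by
  unfold oct; ring

lemma lem2 (T r u : ℤ) :
    12 * T + oct (-2 * u - 1) + oct (2 * r) = 4 * (3 * T + 2 * pent r + oct u) + 1 := by
  unfold oct; linear_combination (-4) * pent_two r

def TSet (N : ℕ) : Set (ℕ × ℤ × ℤ) :=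
  {x | (N : ℤ) = 3 * (tri x.1 : ℤ) + 2 * pent x.2.1 + oct x.2.2}

theorem stmt9 (N : ℕ) :
    tGCount 12 1 1 (2 * N : ℤ) = rtgCount 3 6 1 (N : ℤ) ∧
    tGCount 12 1 1 (4 * N + 1 : ℤ) = 2 * tpgCount 3 2 1 (N : ℤ) ∧
    tGCount 12 1 1 (4 * N + 3 : ℤ) = 0 := by
  refine ⟨?_, ?_, ?_⟩
  · -- Part 1
    have inj : Function.Injective
        (fun y : ℤ × ℕ × ℤ => ((y.2.1, y.2.2 + y.1, y.2.2 - y.1) : ℕ × ℤ × ℤ)) := by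
      rintro ⟨a, l, k⟩ ⟨a', l', k'⟩ h
      simp only [Prod.mk.injEq] at h ⊢
      obtain ⟨h1, h2, h3⟩ := h
      exact ⟨by omega, h1, by omega⟩
    have e2 : rtgCount 3 6 1 (N : ℤ) =
        {x : ℤ × ℕ × ℤ | (N : ℤ) = 3 * x.1 ^ 2 + 6 * (tri x.2.1 : ℤ) + oct x.2.2}.ncard := by
      unfold rtgCount
      congr 1
      ext ⟨a, l, k⟩
      simp only [Set.mem_setOf_eq]
      push_cast
      constructor <;> intro h <;> linarith
    have e1 : tGCount 12 1 1 (2 * N : ℤ) =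
        ((fun y : ℤ × ℕ × ℤ => ((y.2.1, y.2.2 + y.1, y.2.2 - y.1) : ℕ × ℤ × ℤ)) ''
          {x : ℤ × ℕ × ℤ | (N : ℤ) = 3 * x.1 ^ 2 + 6 * (tri x.2.1 : ℤ) + oct x.2.2}).ncard := by
      unfold tGCount
      congr 1
      ext ⟨l, m, n⟩
      simp only [Set.mem_setOf_eq, Set.mem_image, Prod.mk.injEq, Prod.exists]
      push_cast
      constructor
      · intro h
        rcases oct4 m with ⟨u1, j1, hm, ho1⟩ | ⟨u1, j1, hm, ho1⟩ <;>
          rcases oct4 n with ⟨u2, j2, hn, ho2⟩ | ⟨u2, j2, hn, ho2⟩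
        · refine ⟨u1 - u2, u1 + u2, ?_, by omega, by omega⟩
          have hm' : m = (u1 + u2) + (u1 - u2) := by omega
          have hn' : n = (u1 + u2) - (u1 - u2) := by omega
          rw [hm', hn'] at h
          have L := lem1 (tri l : ℤ) (u1 - u2) (u1 + u2)
          linarith
        · exfalso; rw [ho1, ho2] at h; omega
        · exfalso; rw [ho1, ho2] at h; omega
        · refine ⟨u1 - u2, u1 + u2 + 1, ?_, by omega, by omega⟩
          have hm' : m = (u1 + u2 + 1) + (u1 - u2) := by omega
          have hn' : n = (u1 + u2 + 1) - (u1 - u2) := by omega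
          rw [hm', hn'] at h
          have L := lem1 (tri l : ℤ) (u1 - u2) (u1 + u2 + 1)
          linarith
      · rintro ⟨a, c, hmem, -, rfl, rfl⟩
        have L := lem1 (tri l : ℤ) a c
        linarith
    rw [e1, e2, Set.ncard_image_of_injective _ inj]
  · -- Part 2
    have inj1 : Function.Injective
        (fun y : ℕ × ℤ × ℤ => ((y.1, -2 * y.2.2 - 1, 2 * y.2.1) : ℕ × ℤ × ℤ)) := by
      rintro ⟨a, b, c⟩ ⟨a', b', c'⟩ h
      simp only [Prod.mk.injEq] at h ⊢
      obtain ⟨h1, h2, h3⟩ := h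
      exact ⟨h1, by omega, by omega⟩
    have inj2 : Function.Injective
        (fun y : ℕ × ℤ × ℤ => ((y.1, 2 * y.2.1, -2 * y.2.2 - 1) : ℕ × ℤ × ℤ)) := by
      rintro ⟨a, b, c⟩ ⟨a', b', c'⟩ h
      simp only [Prod.mk.injEq] at h ⊢
      obtain ⟨h1, h2, h3⟩ := h
      exact ⟨h1, by omega, by omega⟩
    have htp : tpgCount 3 2 1 (N : ℤ) = (TSet N).ncard := by
      unfold tpgCount TSet
      congr 1
      ext ⟨l, m, n⟩
      simp only [Set.mem_setOf_eq]
      push_cast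
      constructor <;> intro h <;> linarith
    have hdisj : Disjoint
        ((fun y : ℕ × ℤ × ℤ => ((y.1, -2 * y.2.2 - 1, 2 * y.2.1) : ℕ × ℤ × ℤ)) '' TSet N)
        ((fun y : ℕ × ℤ × ℤ => ((y.1, 2 * y.2.1, -2 * y.2.2 - 1) : ℕ × ℤ × ℤ)) '' TSet N) := by
      rw [Set.disjoint_left]
      rintro ⟨l, m, n⟩ ⟨⟨a, b, c⟩, -, h1⟩ ⟨⟨a', b', c'⟩, -, h2⟩
      simp only [Prod.mk.injEq] at h1 h2
      omega
    have eA : tGCount 12 1 1 (4 * N + 1 : ℤ) =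
        ((fun y : ℕ × ℤ × ℤ => ((y.1, -2 * y.2.2 - 1, 2 * y.2.1) : ℕ × ℤ × ℤ)) '' TSet N ∪
         (fun y : ℕ × ℤ × ℤ => ((y.1, 2 * y.2.1, -2 * y.2.2 - 1) : ℕ × ℤ × ℤ)) '' TSet N).ncard := by
      unfold tGCount
      congr 1
      ext ⟨l, m, n⟩
      simp only [Set.mem_setOf_eq, Set.mem_union, Set.mem_image, Prod.mk.injEq, Prod.exists,
        TSet]
      push_cast
      constructor
      · intro h
        rcases oct4 m with ⟨u1, j1, hm, ho1⟩ | ⟨u1, j1, hm, ho1⟩ <;>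
          rcases oct4 n with ⟨u2, j2, hn, ho2⟩ | ⟨u2, j2, hn, ho2⟩
        · exfalso; rw [ho1, ho2] at h; omega
        · -- m even, n odd : second image
          right
          refine ⟨u1, -u2 - 1, ?_, by omega, by omega⟩
          have L := lem2 (tri l : ℤ) u1 (-u2 - 1)
          rw [show (-2 * (-u2 - 1) - 1 : ℤ) = n by omega, show (2 * u1 : ℤ) = m by omega] at L
          linarith
        · -- m odd, n even : first image
          left
          refine ⟨u2, -u1 - 1, ?_, by omega, by omega⟩
          have L := lem2 (tri l : ℤ) u2 (-u1 - 1)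
          rw [show (-2 * (-u1 - 1) - 1 : ℤ) = m by omega, show (2 * u2 : ℤ) = n by omega] at L
          linarith
        · exfalso; rw [ho1, ho2] at h; omega
      · rintro (⟨b, c, hmem, -, rfl, rfl⟩ | ⟨b, c, hmem, -, rfl, rfl⟩)
        · have L := lem2 (tri l : ℤ) b c
          linarith
        · have L := lem2 (tri l : ℤ) b c
          linarith
    rw [eA, htp]
    rcases (TSet N).finite_or_infinite with hfin | hinf
    · rw [Set.ncard_union_eq hdisj (hfin.image _) (hfin.image _),
        Set.ncard_image_of_injective _ inj1, Set.ncard_image_of_injective _ inj2]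
      ring
    · have h1 : ((fun y : ℕ × ℤ × ℤ => ((y.1, -2 * y.2.2 - 1, 2 * y.2.1) : ℕ × ℤ × ℤ)) ''
          TSet N).Infinite := hinf.image inj1.injOn
      have hun : ((fun y : ℕ × ℤ × ℤ => ((y.1, -2 * y.2.2 - 1, 2 * y.2.1) : ℕ × ℤ × ℤ)) '' TSet N ∪
          (fun y : ℕ × ℤ × ℤ => ((y.1, 2 * y.2.1, -2 * y.2.2 - 1) : ℕ × ℤ × ℤ)) '' TSet N).Infinite :=
        h1.mono Set.subset_union_left
      rw [hun.ncard, hinf.ncard]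
  · -- Part 3
    unfold tGCount
    convert Set.ncard_empty (ℕ × ℤ × ℤ)
    ext ⟨l, m, n⟩
    simp only [Set.mem_setOf_eq, Set.mem_empty_iff_false, iff_false]
    intro h
    push_cast at h
    rcases oct4 m with ⟨u1, j1, hm, ho1⟩ | ⟨u1, j1, hm, ho1⟩ <;>
      rcases oct4 n with ⟨u2, j2, hn, ho2⟩ | ⟨u2, j2, hn, ho2⟩ <;>
      rw [ho1, ho2] at h <;> omega
end
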